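/- Let Λ be a row-finite k-graph with no sources. Then Λ is cofinal if and only if the talented monoid T_Λ is simple as a ℤ^k-monoid (its only ℤ^k-order ideals are {0} and T_Λ). -/

import Mathlib

/-!
Both sides are equivalent to: the only nonempty hereditary saturated set of vertices is `Λ⁰`.

For cofinality: the vertices that cannot reach an infinite path `x` form a hereditary saturated
set missing `x(0)`; conversely, saturation lets every vertex outside a hereditary saturated set
`H` leave along an edge of degree `(1, …, 1)` to a vertex outside `H`, and the concatenation of
such edges is an infinite path avoiding `H`.

For `T_Λ`: an order ideal `J` gives the hereditary saturated set `{v | v(0) ∈ J}`, by the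
expansions `v(m) = Σ_{λ ∈ vΛⁿ} s(λ)(m + n)`; a hereditary saturated `H` generates an order ideal
containing `w(0)` exactly for `w ∈ H`, because no defining relation moves a state into or out of
`H`. Without sources no `v(0)` is zero.
-/

/-- A (small) `k`-graph: a small category `Λ` with vertex set `V`, path set `P`,
range and source maps `r, s`, a degree functor `d : Λ → ℕᵏ` satisfying the
unique factorization property. -/
structure KGraph (k : ℕ) where
  V : Type
  P : Type
  r : P → V
  s : P → V
  d : P → Fin k → ℕ
  ident : V → P
  comp : (p q : P) → s p = r q → P
  r_ident : ∀ v, r (ident v) = v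
  s_ident : ∀ v, s (ident v) = v
  d_ident : ∀ v, d (ident v) = 0
  r_comp : ∀ p q h, r (comp p q h) = r p
  s_comp : ∀ p q h, s (comp p q h) = s q
  d_comp : ∀ p q h, d (comp p q h) = d p + d q
  ident_comp : ∀ (p : P) (h : s (ident (r p)) = r p), comp (ident (r p)) p h = p
  comp_ident : ∀ (p : P) (h : s p = r (ident (s p))), comp p (ident (s p)) h = p
  comp_assoc : ∀ (p q t : P) (h1 : s p = r q) (h2 : s q = r t)
      (h3 : s (comp p q h1) = r t) (h4 : s p = r (comp q t h2)),
      comp (comp p q h1) t h3 = comp p (comp q t h2) h4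
  factor : ∀ (p : P) (m n : Fin k → ℕ), d p = m + n →
      ∃! qt : P × P, ∃ h : s qt.1 = r qt.2,
        comp qt.1 qt.2 h = p ∧ d qt.1 = m ∧ d qt.2 = n

namespace KGraph

variable {k : ℕ}

/-- `vΛⁿ`, the set of paths with range `v` and degree `n`. -/
def pathsSet (Λ : KGraph k) (v : Λ.V) (n : Fin k → ℕ) : Set Λ.P :=
  {p | Λ.r p = v ∧ Λ.d p = n}

/-- `Λ` is row-finite if every `vΛⁿ` is finite. -/
def RowFinite (Λ : KGraph k) : Prop := ∀ v n, (Λ.pathsSet v n).Finite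

/-- `Λ` has no sources if every `vΛⁿ` is nonempty. -/
def NoSources (Λ : KGraph k) : Prop := ∀ v n, (Λ.pathsSet v n).Nonempty

/-- The element `Σ_{λ ∈ vΛⁿ} s(λ)` of the free commutative monoid `ℕ^(Λ⁰)`. -/
noncomputable def vSum (Λ : KGraph k) (hfin : Λ.RowFinite) (v : Λ.V) (n : Fin k → ℕ) :
    Λ.V →₀ ℕ :=
  ∑ p ∈ (hfin v n).toFinset, Finsupp.single (Λ.s p) 1

end KGraph

namespace KGraph

/-- The free commutative monoid on `Λ⁰ × ℤᵏ`. -/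
abbrev TalF (Λ : KGraph k) : Type := (Λ.V × (Fin k → ℤ)) →₀ ℕ

/-- The defining relations of the talented monoid:
`v(n) = Σ_{α ∈ vΛ^{e_i}} s(α)(n + e_i)`. -/
noncomputable def TalRel (Λ : KGraph k) (hfin : Λ.RowFinite) : TalF Λ → TalF Λ → Prop :=
  fun a b => ∃ (v : Λ.V) (n : Fin k → ℤ) (i : Fin k),
    a = Finsupp.single (v, n) 1 ∧
    b = ∑ p ∈ (hfin v (Pi.single i 1)).toFinset,
          Finsupp.single (Λ.s p, n + Pi.single i 1) 1

/-- The congruence generated by the defining relations of the talented monoid. -/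
noncomputable def TalCon (Λ : KGraph k) (hfin : Λ.RowFinite) : AddCon (TalF Λ) :=
  addConGen (TalRel Λ hfin)

/-- The talented monoid `T_Λ`. -/
abbrev Tal (Λ : KGraph k) (hfin : Λ.RowFinite) : Type := (TalCon Λ hfin).Quotient

/-- The quotient map `ℕ^(Λ⁰ × ℤᵏ) → T_Λ`. -/
noncomputable def tmk (Λ : KGraph k) (hfin : Λ.RowFinite) : TalF Λ → Tal Λ hfin :=
  (TalCon Λ hfin).mk'

/-- Shift of states on the free commutative monoid; it induces the `ℤᵏ`-action on `T_Λ`. -/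
noncomputable def shiftF (Λ : KGraph k) (p : Fin k → ℤ) : TalF Λ → TalF Λ :=
  Finsupp.mapDomain (fun q => (q.1, q.2 + p))

/-- A `ℤᵏ`-order ideal of `T_Λ`: a submonoid, downward closed in the algebraic
preorder, and closed under the `ℤᵏ`-action (expressed on representatives). -/
noncomputable def IsOrderIdeal (Λ : KGraph k) (hfin : Λ.RowFinite)
    (J : Set (Tal Λ hfin)) : Prop :=
  (0 : Tal Λ hfin) ∈ J ∧
  (∀ a b, a ∈ J → b ∈ J → a + b ∈ J) ∧
  (∀ a b : Tal Λ hfin, a + b ∈ J → a ∈ J) ∧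
  (∀ (p : Fin k → ℤ) (a : TalF Λ), tmk Λ hfin a ∈ J → tmk Λ hfin (shiftF Λ p a) ∈ J)

/-- `H ⊆ Λ⁰` is hereditary. -/
def Hereditary (Λ : KGraph k) (H : Set Λ.V) : Prop :=
  ∀ p : Λ.P, Λ.r p ∈ H → Λ.s p ∈ H

/-- `H ⊆ Λ⁰` is saturated. -/
def Saturated (Λ : KGraph k) (H : Set Λ.V) : Prop :=
  ∀ (v : Λ.V) (n : Fin k → ℕ),
    (∀ p : Λ.P, Λ.r p = v → Λ.d p = n → Λ.s p ∈ H) → v ∈ H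

/-- The `ℤᵏ`-order ideal of `T_Λ` generated by a set `X ⊆ Λ⁰` of vertices:
all `x` with `x ≤ Σᵢ ⁿⁱvᵢ` for finitely many `vᵢ ∈ X`, `nᵢ ∈ ℤᵏ`. -/
noncomputable def genIdeal (Λ : KGraph k) (hfin : Λ.RowFinite) (X : Set Λ.V) :
    Set (Tal Λ hfin) :=
  {x | ∃ b : TalF Λ, (∀ q ∈ b.support, q.1 ∈ X) ∧ ∃ z, x + z = tmk Λ hfin b}

end KGraph

namespace KGraph

/-- An infinite path in `Λ`: a degree-preserving functor `Ω_k → Λ`, recorded by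
its vertices `vert n = x(n)` and segments `seg m n = x(m,n)`. -/
structure InfPath (Λ : KGraph k) where
  vert : (Fin k → ℕ) → Λ.V
  seg : (m n : Fin k → ℕ) → m ≤ n → Λ.P
  seg_r : ∀ m n h, Λ.r (seg m n h) = vert m
  seg_s : ∀ m n h, Λ.s (seg m n h) = vert n
  seg_d : ∀ m n h, Λ.d (seg m n h) = n - m
  seg_id : ∀ m, seg m m le_rfl = Λ.ident (vert m)
  seg_comp : ∀ m n p (h1 : m ≤ n) (h2 : n ≤ p)
      (h : Λ.s (seg m n h1) = Λ.r (seg n p h2)),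
      Λ.comp (seg m n h1) (seg n p h2) h = seg m p (h1.trans h2)

/-- `Λ` is cofinal: every vertex connects to every infinite path. -/
def Cofinal (Λ : KGraph k) : Prop :=
  ∀ (x : InfPath Λ) (v : Λ.V), ∃ (n : Fin k → ℕ) (p : Λ.P),
    Λ.r p = v ∧ Λ.s p = x.vert n

/-- An infinite path `x` is aperiodic: `σᵐ x = σⁿ x` implies `m = n`. -/
def AperiodicPath (Λ : KGraph k) (x : InfPath Λ) : Prop :=
  ∀ m n : Fin k → ℕ,
    (∀ (p q : Fin k → ℕ) (h : p ≤ q),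
      x.seg (p + m) (q + m) (add_le_add h le_rfl)
        = x.seg (p + n) (q + n) (add_le_add h le_rfl)) → m = n

end KGraph

namespace KGraph

variable {k : ℕ} (Λ : KGraph k)

section Factorization

variable {Λ} in
theorem d_eq_add_tsub {p : Λ.P} {m : Fin k → ℕ} (h : m ≤ Λ.d p) : Λ.d p = m + (Λ.d p - m) :=
  (add_tsub_cancel_of_le h).symm

open Classical in
/-- The factorization `p = p(0, m) p(m, d p)`; it is a junk value when `m ≰ d p`. -/
noncomputable def split (p : Λ.P) (m : Fin k → ℕ) : Λ.P × Λ.P :=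
  if h : m ≤ Λ.d p then (Λ.factor p m _ (d_eq_add_tsub h)).choose else (p, p)

noncomputable def pre (p : Λ.P) (m : Fin k → ℕ) : Λ.P := (Λ.split p m).1

noncomputable def suf (p : Λ.P) (m : Fin k → ℕ) : Λ.P := (Λ.split p m).2

variable {p : Λ.P} {m : Fin k → ℕ}

theorem split_spec (h : m ≤ Λ.d p) :
    ∃ hc : Λ.s (Λ.pre p m) = Λ.r (Λ.suf p m), Λ.comp (Λ.pre p m) (Λ.suf p m) hc = p ∧
      Λ.d (Λ.pre p m) = m ∧ Λ.d (Λ.suf p m) = Λ.d p - m := by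
  simp only [pre, suf, split, dif_pos h]
  exact (Λ.factor p m _ (d_eq_add_tsub h)).choose_spec.1

theorem s_pre_eq_r_suf (h : m ≤ Λ.d p) : Λ.s (Λ.pre p m) = Λ.r (Λ.suf p m) :=
  (Λ.split_spec h).1

theorem comp_pre_suf (h : m ≤ Λ.d p) : Λ.comp (Λ.pre p m) (Λ.suf p m) (Λ.s_pre_eq_r_suf h) = p :=
  (Λ.split_spec h).2.1

theorem d_pre (h : m ≤ Λ.d p) : Λ.d (Λ.pre p m) = m := (Λ.split_spec h).2.2.1

theorem d_suf (h : m ≤ Λ.d p) : Λ.d (Λ.suf p m) = Λ.d p - m := (Λ.split_spec h).2.2.2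

theorem r_pre (h : m ≤ Λ.d p) : Λ.r (Λ.pre p m) = Λ.r p := by
  conv_rhs => rw [← Λ.comp_pre_suf h, Λ.r_comp]

theorem s_suf (h : m ≤ Λ.d p) : Λ.s (Λ.suf p m) = Λ.s p := by
  conv_rhs => rw [← Λ.comp_pre_suf h, Λ.s_comp]

theorem comp_congr {a a' b b' : Λ.P} (ha : a = a') (hb : b = b') (h : Λ.s a = Λ.r b)
    (h' : Λ.s a' = Λ.r b') : Λ.comp a b h = Λ.comp a' b' h' := by
  subst ha hb; rfl

theorem pre_suf_comp (a b : Λ.P) (h : Λ.s a = Λ.r b) :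
    Λ.pre (Λ.comp a b h) (Λ.d a) = a ∧ Λ.suf (Λ.comp a b h) (Λ.d a) = b := by
  have hle : Λ.d a ≤ Λ.d (Λ.comp a b h) := by rw [Λ.d_comp]; exact le_self_add
  have hdb : Λ.d b = Λ.d (Λ.comp a b h) - Λ.d a := by rw [Λ.d_comp, add_tsub_cancel_left]
  obtain ⟨hc, hcomp, hdp, hds⟩ := Λ.split_spec hle
  exact Prod.ext_iff.1 <| (Λ.factor _ _ _ (d_eq_add_tsub hle)).unique
    (y₁ := (Λ.pre _ _, Λ.suf _ _)) (y₂ := (a, b)) ⟨hc, hcomp, hdp, hds⟩ ⟨h, rfl, rfl, hdb⟩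

theorem pre_comp (a b : Λ.P) (h : Λ.s a = Λ.r b) : Λ.pre (Λ.comp a b h) (Λ.d a) = a :=
  (Λ.pre_suf_comp a b h).1

theorem suf_comp (a b : Λ.P) (h : Λ.s a = Λ.r b) : Λ.suf (Λ.comp a b h) (Λ.d a) = b :=
  (Λ.pre_suf_comp a b h).2

theorem pre_d (p : Λ.P) : Λ.pre p (Λ.d p) = p := by
  simpa only [Λ.comp_ident] using Λ.pre_comp p (Λ.ident (Λ.s p)) (Λ.r_ident _).symm

theorem suf_d (p : Λ.P) : Λ.suf p (Λ.d p) = Λ.ident (Λ.s p) := by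
  simpa only [Λ.comp_ident] using Λ.suf_comp p (Λ.ident (Λ.s p)) (Λ.r_ident _).symm

theorem eq_ident_of_d_eq_zero (h : Λ.d p = 0) : p = Λ.ident (Λ.r p) := by
  have h1 := Λ.pre_comp (Λ.ident (Λ.r p)) p (Λ.s_ident _)
  rw [Λ.ident_comp, Λ.d_ident, ← h, Λ.pre_d] at h1
  exact h1

theorem pre_suf_comp_of_le {a c : Λ.P} (h : Λ.s a = Λ.r c) (hm : m ≤ Λ.d a) :
    Λ.pre (Λ.comp a c h) m = Λ.pre a m ∧
      Λ.suf (Λ.comp a c h) m = Λ.comp (Λ.suf a m) c (by rw [Λ.s_suf hm]; exact h) := by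
  have hsc : Λ.s (Λ.suf a m) = Λ.r c := by rw [Λ.s_suf hm]; exact h
  have hassoc : Λ.comp a c h = Λ.comp (Λ.pre a m) (Λ.comp (Λ.suf a m) c hsc)
      (by rw [Λ.r_comp]; exact Λ.s_pre_eq_r_suf hm) := by
    rw [← Λ.comp_assoc _ _ _ (Λ.s_pre_eq_r_suf hm) hsc (by rw [Λ.s_comp]; exact hsc)]
    exact Λ.comp_congr (Λ.comp_pre_suf hm).symm rfl _ _
  have hpre := Λ.pre_suf_comp (Λ.pre a m) (Λ.comp (Λ.suf a m) c hsc)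
    (by rw [Λ.r_comp]; exact Λ.s_pre_eq_r_suf hm)
  rw [Λ.d_pre hm, ← hassoc] at hpre
  exact hpre

theorem pre_comp_of_le {a c : Λ.P} (h : Λ.s a = Λ.r c) (hm : m ≤ Λ.d a) :
    Λ.pre (Λ.comp a c h) m = Λ.pre a m :=
  (Λ.pre_suf_comp_of_le h hm).1

theorem pre_pre {n : Fin k → ℕ} (hmn : m ≤ n) (hn : n ≤ Λ.d p) :
    Λ.pre (Λ.pre p n) m = Λ.pre p m := by
  conv_rhs => rw [← Λ.comp_pre_suf hn]
  exact (Λ.pre_comp_of_le _ (by rwa [Λ.d_pre hn])).symm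

theorem comp_suf_pre_suf {n : Fin k → ℕ} (hmn : m ≤ n) (hn : n ≤ Λ.d p)
    (h : Λ.s (Λ.suf (Λ.pre p n) m) = Λ.r (Λ.suf p n)) :
    Λ.comp (Λ.suf (Λ.pre p n) m) (Λ.suf p n) h = Λ.suf p m := by
  conv_rhs => rw [← Λ.comp_pre_suf hn]
  exact ((Λ.pre_suf_comp_of_le _ (by rwa [Λ.d_pre hn])).2).symm

/-- The segment `p(m, n)` of `p`. -/
noncomputable def mid (p : Λ.P) (m n : Fin k → ℕ) : Λ.P := Λ.suf (Λ.pre p n) m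

variable {n : Fin k → ℕ}

theorem d_mid (hmn : m ≤ n) (hn : n ≤ Λ.d p) : Λ.d (Λ.mid p m n) = n - m := by
  rw [mid, Λ.d_suf (by rwa [Λ.d_pre hn]), Λ.d_pre hn]

theorem r_mid (hmn : m ≤ n) (hn : n ≤ Λ.d p) : Λ.r (Λ.mid p m n) = Λ.s (Λ.pre p m) := by
  rw [mid, ← Λ.s_pre_eq_r_suf (by rwa [Λ.d_pre hn]), Λ.pre_pre hmn hn]

theorem s_mid (hmn : m ≤ n) (hn : n ≤ Λ.d p) : Λ.s (Λ.mid p m n) = Λ.s (Λ.pre p n) := by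
  rw [mid, Λ.s_suf (by rwa [Λ.d_pre hn])]

theorem mid_self (hm : m ≤ Λ.d p) : Λ.mid p m m = Λ.ident (Λ.s (Λ.pre p m)) := by
  have h := Λ.suf_d (Λ.pre p m)
  rwa [Λ.d_pre hm] at h

theorem comp_mid_mid {l : Fin k → ℕ} (hmn : m ≤ n) (hnl : n ≤ l) (hl : l ≤ Λ.d p)
    (h : Λ.s (Λ.mid p m n) = Λ.r (Λ.mid p n l)) :
    Λ.comp (Λ.mid p m n) (Λ.mid p n l) h = Λ.mid p m l := by
  have hpre : Λ.pre p n = Λ.pre (Λ.pre p l) n := (Λ.pre_pre hnl hl).symm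
  unfold mid at h ⊢
  exact (Λ.comp_congr (by rw [hpre]) rfl h _).trans
    (Λ.comp_suf_pre_suf hmn (by rwa [Λ.d_pre hl]) (by rw [← hpre]; exact h))

end Factorization

theorem le_const_sum (n : Fin k → ℕ) : n ≤ fun _ => ∑ i, n i :=
  fun i => Finset.single_le_sum (fun _ _ => Nat.zero_le _) (Finset.mem_univ i)

section Concatenation

variable {Λ} {e : ℕ → Λ.P} (he : ∀ j, Λ.s (e j) = Λ.r (e (j + 1)))

/-- The path `e 0 ⋯ e (j - 1)`, ending where `e j` starts. -/
noncomputable def concat : (j : ℕ) → {p : Λ.P // Λ.s p = Λ.r (e j)}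
  | 0 => ⟨Λ.ident (Λ.r (e 0)), Λ.s_ident _⟩
  | j + 1 => ⟨Λ.comp (concat j).1 (e j) (concat j).2, by rw [Λ.s_comp, he]⟩

theorem d_concat (hd : ∀ j, Λ.d (e j) = fun _ => 1) (j : ℕ) :
    Λ.d (concat he j).1 = fun _ => j := by
  induction j with
  | zero => exact Λ.d_ident _
  | succ j ih =>
    simp only [concat, Λ.d_comp, ih, hd]
    rfl

theorem pre_concat_of_le (hd : ∀ j, Λ.d (e j) = fun _ => 1) {n : Fin k → ℕ} {j j' : ℕ}
    (hn : n ≤ fun _ => j) (hj : j ≤ j') :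
    Λ.pre (concat he j').1 n = Λ.pre (concat he j).1 n := by
  induction j', hj using Nat.le_induction with
  | base => rfl
  | succ j' hj ih =>
    rw [← ih]
    refine Λ.pre_comp_of_le _ ?_
    rw [d_concat he hd]
    exact fun i => (hn i).trans hj

theorem pre_concat_eq (hd : ∀ j, Λ.d (e j) = fun _ => 1) {n : Fin k → ℕ} {j j' : ℕ}
    (hn : n ≤ fun _ => j) (hn' : n ≤ fun _ => j') :
    Λ.pre (concat he j).1 n = Λ.pre (concat he j').1 n := by
  rcases le_total j j' with hj | hj
  · exact (pre_concat_of_le he hd hn hj).symm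
  · exact pre_concat_of_le he hd hn' hj

theorem le_d_concat (hd : ∀ j, Λ.d (e j) = fun _ => 1) {n : Fin k → ℕ} {j : ℕ}
    (hn : n ≤ fun _ => j) : n ≤ Λ.d (concat he j).1 := by
  rwa [d_concat he hd]

/-- The infinite path `e 0 e 1 e 2 ⋯`; its segment `(m, n)` is cut out of the finite path
`e 0 ⋯ e (|n| - 1)`, which is long enough since `n ≤ (|n|, …, |n|)`. -/
noncomputable def InfPath.ofEdges (hd : ∀ j, Λ.d (e j) = fun _ => 1) : InfPath Λ where
  vert n := Λ.s (Λ.pre (concat he (∑ i, n i)).1 n)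
  seg m n _ := Λ.mid (concat he (∑ i, n i)).1 m n
  seg_r m n h := by
    rw [Λ.r_mid h (le_d_concat he hd (le_const_sum n)),
      pre_concat_eq he hd (h.trans (le_const_sum n)) (le_const_sum m)]
  seg_s m n h := Λ.s_mid h (le_d_concat he hd (le_const_sum n))
  seg_d m n h := Λ.d_mid h (le_d_concat he hd (le_const_sum n))
  seg_id m := Λ.mid_self (le_d_concat he hd (le_const_sum m))
  seg_comp m n l h1 h2 h := by
    have hmid : Λ.mid (concat he (∑ i, n i)).1 m n = Λ.mid (concat he (∑ i, l i)).1 m n := by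
      rw [mid, mid, pre_concat_eq he hd (le_const_sum n) (h2.trans (le_const_sum l))]
    exact (Λ.comp_congr hmid rfl h (hmid ▸ h)).trans
      (Λ.comp_mid_mid h1 h2 (le_d_concat he hd (le_const_sum l)) _)

theorem InfPath.ofEdges_vert_const (hd : ∀ j, Λ.d (e j) = fun _ => 1) (j : ℕ) :
    (InfPath.ofEdges he hd).vert (fun _ => j) = Λ.r (e j) := by
  change Λ.s (Λ.pre _ _) = _
  rw [pre_concat_eq he hd (le_const_sum _) le_rfl, ← d_concat he hd j, Λ.pre_d]
  exact (concat he j).2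

end Concatenation

section Cofinality

variable {Λ} {H : Set Λ.V}

theorem exists_infPath_forall_vert_not_mem (hH : Hereditary Λ H) (hS : Saturated Λ H)
    {v : Λ.V} (hv : v ∉ H) : ∃ x : InfPath Λ, ∀ n, x.vert n ∉ H := by
  have hstep : ∀ w : {w // w ∉ H}, ∃ e : Λ.P,
      Λ.r e = w ∧ Λ.d e = (fun _ => 1) ∧ Λ.s e ∉ H := by
    intro w
    by_contra! hw
    exact w.2 (hS w _ fun p hr hd => hw p hr hd)
  choose f hfr hfd hfs using hstep
  let w : ℕ → {w // w ∉ H} := fun j => Nat.rec ⟨v, hv⟩ (fun _ u => ⟨Λ.s (f u), hfs u⟩) j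
  have he : ∀ j, Λ.s (f (w j)) = Λ.r (f (w (j + 1))) := fun j => (hfr (w (j + 1))).symm
  let x := InfPath.ofEdges he (fun j => hfd (w j))
  refine ⟨x, fun n hn => ?_⟩
  have hfar : x.vert (fun _ => ∑ i, n i) ∈ H := by
    rw [← x.seg_s n _ (le_const_sum n)]
    exact hH _ (by rwa [x.seg_r])
  rw [InfPath.ofEdges_vert_const, hfr] at hfar
  exact (w _).2 hfar

def InfPath.unreachable (x : InfPath Λ) : Set Λ.V :=
  {w | ∀ n p, Λ.r p = w → Λ.s p ≠ x.vert n}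

theorem InfPath.hereditary_unreachable (x : InfPath Λ) : Hereditary Λ x.unreachable :=
  fun p hp n q hq hqx => hp n (Λ.comp p q hq.symm) (Λ.r_comp _ _ _) (by rwa [Λ.s_comp])

theorem InfPath.saturated_unreachable (x : InfPath Λ) : Saturated Λ x.unreachable := by
  intro w n hall m q hq hqx
  have hseg : Λ.s q = Λ.r (x.seg m (m + n) le_self_add) := by rw [x.seg_r, hqx]
  set c := Λ.comp q (x.seg m (m + n) le_self_add) hseg
  have hn : n ≤ Λ.d c := by rw [Λ.d_comp, x.seg_d, add_tsub_cancel_left]; exact le_add_self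
  refine hall (Λ.pre c n) (by rw [Λ.r_pre hn, Λ.r_comp, hq]) (Λ.d_pre hn) (m + n)
    (Λ.suf c n) (Λ.s_pre_eq_r_suf hn).symm ?_
  rw [Λ.s_suf hn, Λ.s_comp, x.seg_s]

theorem cofinal_iff_forall_hereditary_saturated :
    Cofinal Λ ↔ ∀ H : Set Λ.V, Hereditary Λ H → Saturated Λ H → H.Nonempty → H = Set.univ := by
  constructor
  · rintro hcof H hH hS ⟨v, hv⟩
    refine Set.eq_univ_of_forall fun w => by_contra fun hw => ?_
    obtain ⟨x, hx⟩ := exists_infPath_forall_vert_not_mem hH hS hw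
    obtain ⟨n, p, hp, hpx⟩ := hcof x v
    exact hx n (hpx ▸ hH p (hp ▸ hv))
  · intro h x v
    by_contra! hv
    have hx0 : x.vert 0 ∉ x.unreachable := fun h0 =>
      h0 0 (Λ.ident _) (Λ.r_ident _) (Λ.s_ident _)
    rw [h _ x.hereditary_unreachable x.saturated_unreachable ⟨v, hv⟩] at hx0
    exact hx0 trivial

end Cofinality

section TalentedMonoid

variable {Λ} (hfin : Λ.RowFinite)

theorem mem_toFinset_pathsSet {v : Λ.V} {n : Fin k → ℕ} {p : Λ.P} :
    p ∈ (hfin v n).toFinset ↔ Λ.r p = v ∧ Λ.d p = n :=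
  Set.Finite.mem_toFinset _

theorem toFinset_pathsSet_zero (v : Λ.V) : (hfin v 0).toFinset = {Λ.ident v} := by
  ext p
  rw [mem_toFinset_pathsSet, Finset.mem_singleton]
  constructor
  · rintro ⟨rfl, hd⟩
    exact Λ.eq_ident_of_d_eq_zero hd
  · rintro rfl
    exact ⟨Λ.r_ident v, Λ.d_ident v⟩

/-- Unique factorization makes `λ ↦ (λ(0, a), λ(a, a + b))` a bijection
`vΛ^{a+b} ≃ Σ_{μ ∈ vΛ^a} s(μ)Λ^b`. -/
theorem sum_pathsSet_add {M : Type*} [AddCommMonoid M] (v : Λ.V) (a b : Fin k → ℕ)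
    (g : Λ.V → M) :
    ∑ q ∈ (hfin v (a + b)).toFinset, g (Λ.s q) =
      ∑ p ∈ (hfin v a).toFinset, ∑ q ∈ (hfin (Λ.s p) b).toFinset, g (Λ.s q) := by
  rw [← Finset.sum_sigma (hfin v a).toFinset (fun p => (hfin (Λ.s p) b).toFinset)
    (fun x => g (Λ.s x.2))]
  have hle : ∀ q ∈ (hfin v (a + b)).toFinset, a ≤ Λ.d q := fun q hq => by
    rw [((mem_toFinset_pathsSet hfin).1 hq).2]; exact le_self_add
  have hmem : ∀ x ∈ (hfin v a).toFinset.sigma fun p => (hfin (Λ.s p) b).toFinset,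
      (Λ.r x.1 = v ∧ Λ.d x.1 = a) ∧ Λ.r x.2 = Λ.s x.1 ∧ Λ.d x.2 = b := fun x hx => by
    simpa only [Finset.mem_sigma, mem_toFinset_pathsSet] using hx
  refine Finset.sum_bij' (fun q _ => ⟨Λ.pre q a, Λ.suf q a⟩)
    (fun x hx => Λ.comp x.1 x.2 (hmem x hx).2.1.symm) (fun q hq => ?_) (fun x hx => ?_)
    (fun q hq => Λ.comp_pre_suf (hle q hq)) (fun x hx => ?_) (fun q hq => ?_)
  · have hq' := (mem_toFinset_pathsSet hfin).1 hq
    simp only [Finset.mem_sigma, mem_toFinset_pathsSet]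
    rw [Λ.r_pre (hle q hq), Λ.d_pre (hle q hq), Λ.d_suf (hle q hq), hq'.1, hq'.2,
      add_tsub_cancel_left]
    exact ⟨⟨rfl, rfl⟩, (Λ.s_pre_eq_r_suf (hle q hq)).symm, rfl⟩
  · obtain ⟨⟨hr, hda⟩, -, hdb⟩ := hmem x hx
    rw [mem_toFinset_pathsSet, Λ.r_comp, Λ.d_comp, hr, hda, hdb]
    exact ⟨rfl, rfl⟩
  · have h := Λ.pre_suf_comp x.1 x.2 (hmem x hx).2.1.symm
    simp only [(hmem x hx).1.2] at h
    exact Sigma.ext h.1 (heq_of_eq h.2)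
  · rw [Λ.s_suf (hle q hq)]

/-- The generator `w(m)` of `T_Λ`. -/
noncomputable def gen (w : Λ.V) (m : Fin k → ℤ) : Tal Λ hfin :=
  tmk Λ hfin (Finsupp.single (w, m) 1)

theorem tmk_add (a b : TalF Λ) : tmk Λ hfin (a + b) = tmk Λ hfin a + tmk Λ hfin b :=
  map_add (TalCon Λ hfin).mk' a b

theorem tmk_zero : tmk Λ hfin 0 = 0 := map_zero (TalCon Λ hfin).mk'

theorem tmk_eq_tmk_iff {a b : TalF Λ} : tmk Λ hfin a = tmk Λ hfin b ↔ TalCon Λ hfin a b :=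
  AddCon.eq _

theorem tmk_surjective : Function.Surjective (tmk Λ hfin) := AddCon.mk'_surjective

theorem gen_eq_sum_of_single (v : Λ.V) (m : Fin k → ℤ) (i : Fin k) :
    gen hfin v m = ∑ p ∈ (hfin v (Pi.single i 1)).toFinset,
      gen hfin (Λ.s p) (m + Pi.single i 1) :=
  ((TalCon Λ hfin).eq.2 (AddConGen.Rel.of _ _ ⟨v, m, i, rfl, rfl⟩)).trans
    (map_sum (TalCon Λ hfin).mk' _ _)

theorem gen_eq_sum (n : Fin k → ℕ) (v : Λ.V) (m : Fin k → ℤ) :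
    gen hfin v m = ∑ q ∈ (hfin v n).toFinset, gen hfin (Λ.s q) (m + fun i => (n i : ℤ)) := by
  classical
  let Expands : (Fin k → ℕ) → Prop := fun n => ∀ v m,
    gen hfin v m = ∑ q ∈ (hfin v n).toFinset, gen hfin (Λ.s q) (m + fun i => (n i : ℤ))
  have hzero : Expands 0 := by
    intro v m
    simp [toFinset_pathsSet_zero, Λ.s_ident, ← Pi.zero_def]
  have hadd : ∀ a b, Expands a → Expands b → Expands (a + b) := by
    intro a b ha hb v m
    have hcast : (m + fun i => (a i : ℤ)) + (fun i => (b i : ℤ)) =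
        m + fun i => ((a + b) i : ℤ) := by
      funext i; simp only [Pi.add_apply, Nat.cast_add]; ring
    calc gen hfin v m
        = ∑ p ∈ (hfin v a).toFinset, gen hfin (Λ.s p) (m + fun i => (a i : ℤ)) := ha v m
      _ = ∑ p ∈ (hfin v a).toFinset, ∑ q ∈ (hfin (Λ.s p) b).toFinset,
            gen hfin (Λ.s q) (m + fun i => ((a + b) i : ℤ)) := by
        simp only [← hcast]
        exact Finset.sum_congr rfl fun p _ => hb _ _
      _ = _ := (sum_pathsSet_add hfin v a b
            fun w => gen hfin w (m + fun i => ((a + b) i : ℤ))).symm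
  have hunit : ∀ i, Expands (Pi.single i 1) := by
    intro i v m
    have hcast : (fun j => ((Pi.single i 1 : Fin k → ℕ) j : ℤ)) = Pi.single i 1 := by
      funext j; by_cases hj : j = i <;> simp [hj]
    rw [hcast]
    exact gen_eq_sum_of_single hfin v m i
  suffices h : Expands n from h v m
  refine Pi.single_induction Expands n hzero hadd fun i c => ?_
  induction c with
  | zero => simpa using hzero
  | succ c ih => simpa [Pi.single_add] using hadd _ _ ih (hunit i)

section OrderIdeal

variable {hfin} {J : Set (Tal Λ hfin)}

theorem shiftF_single (w : Λ.V) (m p : Fin k → ℤ) :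
    shiftF Λ p (Finsupp.single (w, m) 1) = Finsupp.single (w, m + p) 1 :=
  Finsupp.mapDomain_single

theorem IsOrderIdeal.gen_mem (hJ : IsOrderIdeal Λ hfin J) {w : Λ.V} {m : Fin k → ℤ}
    (hw : gen hfin w m ∈ J) (m' : Fin k → ℤ) : gen hfin w m' ∈ J := by
  have h := hJ.2.2.2 (m' - m) _ hw
  rwa [shiftF_single, add_sub_cancel] at h

theorem IsOrderIdeal.tmk_mem_of_le (hJ : IsOrderIdeal Λ hfin J) {a b : TalF Λ}
    (hb : tmk Λ hfin b ∈ J) (hab : a ≤ b) : tmk Λ hfin a ∈ J := by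
  obtain ⟨c, rfl⟩ := le_iff_exists_add.1 hab
  exact hJ.2.2.1 _ _ (by rwa [← tmk_add])

theorem IsOrderIdeal.sum_mem (hJ : IsOrderIdeal Λ hfin J) {ι : Type*} (s : Finset ι)
    {f : ι → Tal Λ hfin} (hf : ∀ i ∈ s, f i ∈ J) : ∑ i ∈ s, f i ∈ J :=
  Finset.sum_induction f (· ∈ J) hJ.2.1 hJ.1 hf

theorem IsOrderIdeal.hereditary (hJ : IsOrderIdeal Λ hfin J) :
    Hereditary Λ {w | gen hfin w 0 ∈ J} := by
  classical
  intro p hp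
  have hmem : p ∈ (hfin (Λ.r p) (Λ.d p)).toFinset := (mem_toFinset_pathsSet hfin).2 ⟨rfl, rfl⟩
  rw [Set.mem_ofPred_eq, gen_eq_sum hfin (Λ.d p), ← Finset.add_sum_erase _ _ hmem] at hp
  exact hJ.gen_mem (hJ.2.2.1 _ _ hp) 0

theorem IsOrderIdeal.saturated (hJ : IsOrderIdeal Λ hfin J) :
    Saturated Λ {w | gen hfin w 0 ∈ J} := by
  intro v n hall
  rw [Set.mem_ofPred_eq, gen_eq_sum hfin n]
  refine hJ.sum_mem _ fun q hq => hJ.gen_mem (m := 0) ?_ _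
  exact hall q ((mem_toFinset_pathsSet hfin).1 hq).1 ((mem_toFinset_pathsSet hfin).1 hq).2

theorem IsOrderIdeal.exists_gen_mem (hJ : IsOrderIdeal Λ hfin J) (hJ0 : J ≠ {0}) :
    ∃ w, gen hfin w 0 ∈ J := by
  obtain ⟨t, htJ, ht0⟩ : ∃ t ∈ J, t ≠ 0 := by
    by_contra! h
    exact hJ0 (Set.eq_singleton_iff_unique_mem.2 ⟨hJ.1, h⟩)
  obtain ⟨b, rfl⟩ := tmk_surjective hfin t
  obtain ⟨q, hq⟩ : b.support.Nonempty :=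
    Finsupp.support_nonempty_iff.2 fun hb => ht0 (by rw [hb, tmk_zero])
  refine ⟨q.1, hJ.gen_mem (m := q.2) (hJ.tmk_mem_of_le htJ ?_) 0⟩
  exact Finsupp.single_le_iff.2 (Nat.one_le_iff_ne_zero.2 (Finsupp.mem_support_iff.1 hq))

theorem IsOrderIdeal.eq_univ_of_forall_gen_mem (hJ : IsOrderIdeal Λ hfin J)
    (h : ∀ w, gen hfin w 0 ∈ J) : J = Set.univ := by
  refine Set.eq_univ_of_forall fun t => ?_
  obtain ⟨b, rfl⟩ := tmk_surjective hfin t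
  induction b using Finsupp.induction_linear with
  | zero => rw [tmk_zero]; exact hJ.1
  | add a b ha hb => rw [tmk_add]; exact hJ.2.1 _ _ ha hb
  | single q c =>
    induction c with
    | zero => rw [Finsupp.single_zero, tmk_zero]; exact hJ.1
    | succ c ih => rw [Finsupp.single_add, tmk_add]; exact hJ.2.1 _ _ ih (hJ.gen_mem (h q.1) q.2)

end OrderIdeal

section GeneratedIdeal

variable {hfin} {H : Set Λ.V}

open Classical in
theorem forall_mem_support_iff_filter_eq_zero (a : TalF Λ) :
    (∀ q ∈ a.support, q.1 ∈ H) ↔ a.filter (fun q => q.1 ∉ H) = 0 := by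
  simp only [Finsupp.filter_eq_zero_iff, Finsupp.mem_support_iff, not_imp_comm]

/-- Each defining relation `v(n) = Σ_{α ∈ vΛ^{e_i}} s(α)(n + e_i)` has its left side supported
in `H` iff its right side is: by heredity in one direction, by saturation in the other. -/
theorem forall_mem_support_congr (hH : Hereditary Λ H) (hS : Saturated Λ H) {a b : TalF Λ}
    (h : TalCon Λ hfin a b) : (∀ q ∈ a.support, q.1 ∈ H) ↔ (∀ q ∈ b.support, q.1 ∈ H) := by
  classical
  simp only [forall_mem_support_iff_filter_eq_zero]
  let c : AddCon (TalF Λ) :=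
    { r := fun a b => (a.filter (fun q => q.1 ∉ H) = 0 ↔ b.filter (fun q => q.1 ∉ H) = 0)
      iseqv := ⟨fun _ => Iff.rfl, Iff.symm, Iff.trans⟩
      add' := fun h1 h2 => by
        simp only [Finsupp.filter_add, add_eq_zero]
        exact and_congr h1 h2 }
  refine (AddCon.addConGen_le.2 ?_ : TalCon Λ hfin ≤ c) h
  rintro _ _ ⟨v, n, i, rfl, rfl⟩
  have hsingle : ∀ q : Λ.V × (Fin k → ℤ),
      (Finsupp.single q 1).filter (fun q => q.1 ∉ H) = 0 ↔ q.1 ∈ H := fun q => by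
    rw [← forall_mem_support_iff_filter_eq_zero]
    simp
  change _ ↔ Finsupp.filter _ (∑ p ∈ _, _) = 0
  simp only [Finsupp.filter_sum, Finset.sum_eq_zero_iff, hsingle]
  refine ⟨fun hv p hp => hH p ?_, fun hall => hS v (Pi.single i 1) fun p hr hd => hall p ?_⟩
  · rwa [((mem_toFinset_pathsSet hfin).1 hp).1]
  · exact (mem_toFinset_pathsSet hfin).2 ⟨hr, hd⟩

theorem forall_mem_support_of_tmk_mem_genIdeal (hH : Hereditary Λ H) (hS : Saturated Λ H)
    {a : TalF Λ} (ha : tmk Λ hfin a ∈ genIdeal Λ hfin H) : ∀ q ∈ a.support, q.1 ∈ H := by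
  obtain ⟨b, hb, z, hz⟩ := ha
  obtain ⟨z, rfl⟩ := tmk_surjective hfin z
  rw [← tmk_add, tmk_eq_tmk_iff] at hz
  have hab := (forall_mem_support_congr hH hS hz).2 hb
  exact fun q hq => hab q (Finsupp.support_mono le_self_add hq)

theorem isOrderIdeal_genIdeal (hH : Hereditary Λ H) (hS : Saturated Λ H) :
    IsOrderIdeal Λ hfin (genIdeal Λ hfin H) := by
  refine ⟨⟨0, by simp, 0, by rw [add_zero, tmk_zero]⟩, ?_, ?_, ?_⟩
  · rintro _ _ ⟨b₁, hb₁, z₁, h₁⟩ ⟨b₂, hb₂, z₂, h₂⟩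
    refine ⟨b₁ + b₂, fun q hq => ?_, z₁ + z₂, by rw [tmk_add, ← h₁, ← h₂]; abel⟩
    classical
    rcases Finset.mem_union.1 (Finsupp.support_add hq) with hq | hq
    exacts [hb₁ q hq, hb₂ q hq]
  · rintro a b ⟨c, hc, z, h⟩
    exact ⟨c, hc, b + z, by rw [← add_assoc, h]⟩
  · classical
    intro p a ha
    refine ⟨shiftF Λ p a, fun q hq => ?_, 0, add_zero _⟩
    obtain ⟨q₀, hq₀, rfl⟩ := Finset.mem_image.1 (Finsupp.mapDomain_support hq)
    exact forall_mem_support_of_tmk_mem_genIdeal hH hS ha q₀ hq₀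

theorem gen_mem_genIdeal_iff (hH : Hereditary Λ H) (hS : Saturated Λ H) {w : Λ.V}
    {m : Fin k → ℤ} : gen hfin w m ∈ genIdeal Λ hfin H ↔ w ∈ H := by
  constructor
  · intro hw
    exact forall_mem_support_of_tmk_mem_genIdeal hH hS hw (w, m) (by simp)
  · intro hw
    exact ⟨_, fun q hq => by rw [Finsupp.mem_support_single] at hq; exact hq.1 ▸ hw, 0, add_zero _⟩

theorem gen_ne_zero (hns : Λ.NoSources) (w : Λ.V) (m : Fin k → ℤ) : gen hfin w m ≠ 0 := by
  -- `∅` is saturated as there are no sources; the ideal it generates contains `0` but no `w(m)`.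
  have hS : Saturated Λ ∅ := fun v n h => by
    obtain ⟨p, hr, hd⟩ := hns v n
    exact h p hr hd
  intro h0
  have h := (isOrderIdeal_genIdeal (hfin := hfin) (fun _ => id) hS).1
  rw [← h0, gen_mem_genIdeal_iff (fun _ => id) hS] at h
  exact h

end GeneratedIdeal

end TalentedMonoid

end KGraph

open KGraph in
theorem stmt13_general {k : ℕ} (Λ : KGraph k) (hfin : Λ.RowFinite) (hns : Λ.NoSources) :
    Cofinal Λ ↔
      ∀ J : Set (Tal Λ hfin), IsOrderIdeal Λ hfin J → J = {0} ∨ J = Set.univ := by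
  rw [cofinal_iff_forall_hereditary_saturated]
  constructor
  · intro h J hJ
    refine or_iff_not_imp_left.2 fun hJ0 => hJ.eq_univ_of_forall_gen_mem fun w => ?_
    obtain ⟨v, hv⟩ := hJ.exists_gen_mem hJ0
    have hall := h _ hJ.hereditary hJ.saturated ⟨v, hv⟩
    exact (Set.eq_univ_iff_forall.1 hall w : _)
  · rintro h H hH hS ⟨v, hv⟩
    rcases h _ (isOrderIdeal_genIdeal hH hS) with h0 | huniv
    · have hv' := (gen_mem_genIdeal_iff (hfin := hfin) (m := 0) hH hS).2 hv
      rw [h0] at hv'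
      exact absurd hv' (gen_ne_zero hns v 0)
    · exact Set.eq_univ_of_forall fun w =>
        (gen_mem_genIdeal_iff (m := 0) hH hS).1 (huniv ▸ Set.mem_univ _)

open KGraph in
/-- A row-finite `k`-graph `Λ` with no sources is cofinal iff its talented monoid
`T_Λ` is a simple `ℤᵏ`-monoid (its only `ℤᵏ`-order ideals are `{0}` and `T_Λ`). -/
theorem stmt13 {k : ℕ} (Λ : KGraph k) (hfin : Λ.RowFinite) (hns : Λ.NoSources)
    [Nonempty Λ.V] :
    Cofinal Λ ↔
      ∀ J : Set (Tal Λ hfin), IsOrderIdeal Λ hfin J → J = {0} ∨ J = Set.univ :=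
  stmt13_general Λ hfin hns
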